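/- arXiv:2101.01109 — 3 statements merged into one kernel-verified Lean document; each statement's English description precedes it below -/
import Mathlib

section
/- Let n ≥ 1 and s ∈ ℝ. There exists a constant c > 0, depending only on n and s, such that for every family (u_j)_{j ∈ ℤ} of Schwartz functions on ℝⁿ with supp 𝓕u_j ⊆ {ξ : 2^{j−1} ≤ |ξ| ≤ 3·2^{j−1}} for every j, and with M := sup_{j ∈ ℤ} 2^{js} ‖u_j‖_{L¹(ℝⁿ)} < ∞, the function v(ξ) := Σ_{j ∈ ℤ} 𝓕u_j(ξ) (a sum with only finitely many nonzero terms for each ξ ≠ 0) satisfies |ξ|^s |v(ξ)| ≤ c · M for every ξ ≠ 0. -/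
/-!
Each `𝓕 u_j` is bounded pointwise by `‖u_j‖_{L¹}`, and `|ξ|` is comparable to `2^j` on the
annulus carrying `𝓕 u_j`, so `|ξ|^s |𝓕 u_j(ξ)| ≤ 2^{|s|} 2^{js} ‖u_j‖_{L¹} ≤ 2^{|s|} M`.
The annuli overlap boundedly: a given `ξ ≠ 0` lies only in those with
`j ∈ {⌊log₂ |ξ|⌋, ⌊log₂ |ξ|⌋ + 1}`, so `c = 2^{|s| + 1}` works.
-/

open MeasureTheory SchwartzMap Real FourierTransform ENNReal Function

def dyadicAnnulus {E : Type*} [Norm E] (j : ℤ) : Set E :=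
  {ξ | (2:ℝ) ^ (j - 1) ≤ ‖ξ‖ ∧ ‖ξ‖ ≤ 3 * (2:ℝ) ^ (j - 1)}

theorem Real.rpow_le_two_rpow_abs {x : ℝ} (s : ℝ) (h₁ : 1 / 2 ≤ x) (h₂ : x ≤ 2) :
    x ^ s ≤ 2 ^ |s| := by
  rcases le_or_gt 0 s with hs | hs
  · rw [abs_of_nonneg hs]
    exact rpow_le_rpow (by linarith) h₂ hs
  · calc x ^ s ≤ (1 / 2) ^ s := rpow_le_rpow_of_nonpos (by norm_num) h₁ hs.le
      _ = 2 ^ |s| := by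
        rw [abs_of_neg hs, one_div, inv_rpow zero_le_two, rpow_neg zero_le_two]

section DyadicAnnulus

variable {E : Type*} [SeminormedAddCommGroup E] {j : ℤ} {ξ : E}

theorem norm_rpow_le_of_mem_dyadicAnnulus (s : ℝ) (hξ : ξ ∈ dyadicAnnulus j) :
    ‖ξ‖ ^ s ≤ 2 ^ |s| * 2 ^ ((j : ℝ) * s) := by
  obtain ⟨h₁, h₂⟩ := hξ
  have hj : (0:ℝ) < 2 ^ j := _root_.zpow_pos two_pos j
  have hsub : (2:ℝ) ^ (j - 1) = 2 ^ j / 2 := by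
    rw [zpow_sub₀ two_ne_zero, zpow_one]
  rw [hsub] at h₁ h₂
  have hratio : ‖ξ‖ ^ s = (‖ξ‖ / 2 ^ j) ^ s * 2 ^ ((j : ℝ) * s) := by
    rw [div_rpow (norm_nonneg ξ) hj.le, rpow_mul zero_le_two, Real.rpow_intCast,
      div_mul_cancel₀ _ (rpow_pos_of_pos hj s).ne']
  rw [hratio]
  gcongr
  apply rpow_le_two_rpow_abs
  · rw [le_div_iff₀ hj]; linarith
  · rw [div_le_iff₀ hj]; linarith

theorem mem_pair_log_of_mem_dyadicAnnulus (hξ : ξ ∈ dyadicAnnulus j) :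
    j ∈ ({Int.log 2 ‖ξ‖, Int.log 2 ‖ξ‖ + 1} : Finset ℤ) := by
  obtain ⟨h₁, h₂⟩ := hξ
  have hξpos : 0 < ‖ξ‖ := (_root_.zpow_pos two_pos _).trans_le h₁
  have hlower : j - 1 ≤ Int.log 2 ‖ξ‖ :=
    (Int.zpow_le_iff_le_log one_lt_two hξpos).mp (by exact_mod_cast h₁)
  have hupper : Int.log 2 ‖ξ‖ < j + 1 := by
    refine (Int.lt_zpow_iff_log_lt one_lt_two hξpos).mp ?_
    have hpow : (2:ℝ) ^ (j + 1) = 4 * 2 ^ (j - 1) := by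
      rw [show j + 1 = j - 1 + 2 by ring, zpow_add₀ two_ne_zero]; norm_num [mul_comm]
    push_cast
    linarith [_root_.zpow_pos (two_pos (α := ℝ)) (j - 1)]
  simp only [Finset.mem_insert, Finset.mem_singleton]
  omega

theorem tsum_eq_add_of_support_subset_dyadicAnnulus {F : Type*} [AddCommMonoid F]
    [TopologicalSpace F] {g : ℤ → E → F} (hg : ∀ j, support (g j) ⊆ dyadicAnnulus j) (ξ : E) :
    ∑' j, g j ξ = g (Int.log 2 ‖ξ‖) ξ + g (Int.log 2 ‖ξ‖ + 1) ξ := by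
  rw [tsum_eq_sum (s := {Int.log 2 ‖ξ‖, Int.log 2 ‖ξ‖ + 1}), Finset.sum_pair (by omega)]
  intro j hj
  by_contra hne
  exact hj (mem_pair_log_of_mem_dyadicAnnulus (hg j (mem_support.mpr hne)))

end DyadicAnnulus

section Fourier

variable {V F : Type*} [NormedAddCommGroup V] [InnerProductSpace ℝ V] [MeasurableSpace V]
  [BorelSpace V] [FiniteDimensional ℝ V] [NormedAddCommGroup F] [NormedSpace ℂ F]

theorem enorm_fourier_le_eLpNorm_one (f : V → F) (ξ : V) :
    ‖𝓕 f ξ‖ₑ ≤ eLpNorm f 1 volume := by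
  rw [fourier_eq, eLpNorm_one_eq_lintegral_enorm]
  refine (enorm_integral_le_lintegral_enorm _).trans_eq (lintegral_congr fun x => ?_)
  rw [Circle.smul_def, enorm_smul, ← ofReal_norm, Circle.norm_coe, ofReal_one, one_mul]

theorem rpow_norm_mul_enorm_fourier_le {f : V → F} {j : ℤ}
    (hf : support (𝓕 f) ⊆ dyadicAnnulus j) (s : ℝ) (ξ : V) :
    ENNReal.ofReal (‖ξ‖ ^ s) * ‖𝓕 f ξ‖ₑ ≤
      ENNReal.ofReal (2 ^ |s|) * (ENNReal.ofReal (2 ^ ((j : ℝ) * s)) * eLpNorm f 1 volume) := by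
  by_cases hzero : 𝓕 f ξ = 0
  · simp [hzero]
  calc ENNReal.ofReal (‖ξ‖ ^ s) * ‖𝓕 f ξ‖ₑ
      ≤ ENNReal.ofReal (2 ^ |s| * 2 ^ ((j : ℝ) * s)) * eLpNorm f 1 volume :=
        mul_le_mul' (ofReal_le_ofReal (norm_rpow_le_of_mem_dyadicAnnulus s (hf hzero)))
          (enorm_fourier_le_eLpNorm_one f ξ)
    _ = _ := by rw [ofReal_mul (by positivity), mul_assoc]

end Fourier

theorem stmt2_general (n : ℕ) (s : ℝ) :
    ∃ c > 0, ∀ (u : ℤ → SchwartzMap (EuclideanSpace ℝ (Fin n)) ℂ),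
      (∀ j : ℤ, Function.support (𝓕 (⇑(u j))) ⊆
        {ξ : EuclideanSpace ℝ (Fin n) | (2:ℝ) ^ (j-1) ≤ ‖ξ‖ ∧ ‖ξ‖ ≤ 3 * (2:ℝ) ^ (j-1)}) →
      ∀ M : ℝ≥0∞,
        (M = ⨆ j : ℤ, ENNReal.ofReal ((2:ℝ) ^ ((j:ℝ) * s)) * eLpNorm (⇑(u j)) 1 volume) →
        M < ∞ →
      ∀ v : EuclideanSpace ℝ (Fin n) → ℂ,
        (v = fun ξ => ∑' j : ℤ, 𝓕 (⇑(u j)) ξ) →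
        ∀ ξ : EuclideanSpace ℝ (Fin n), ξ ≠ 0 →
          ENNReal.ofReal (‖ξ‖ ^ s) * (‖v ξ‖₊ : ℝ≥0∞) ≤ ENNReal.ofReal c * M := by
  refine ⟨2 * 2 ^ |s|, by positivity, ?_⟩
  rintro u hsupp M hM - v rfl ξ -
  set m := Int.log 2 ‖ξ‖
  have hterm (j : ℤ) :
      ENNReal.ofReal (‖ξ‖ ^ s) * ‖𝓕 (⇑(u j)) ξ‖ₑ ≤ ENNReal.ofReal (2 ^ |s|) * M :=
    (rpow_norm_mul_enorm_fourier_le (hsupp j) s ξ).trans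
      (by rw [hM]; gcongr; exact le_iSup_of_le j le_rfl)
  calc ENNReal.ofReal (‖ξ‖ ^ s) * ‖∑' j, 𝓕 (⇑(u j)) ξ‖ₑ
      = ENNReal.ofReal (‖ξ‖ ^ s) * ‖𝓕 (⇑(u m)) ξ + 𝓕 (⇑(u (m + 1))) ξ‖ₑ := by
        rw [tsum_eq_add_of_support_subset_dyadicAnnulus (g := fun j => 𝓕 (⇑(u j))) hsupp]
    _ ≤ ENNReal.ofReal (‖ξ‖ ^ s) * ‖𝓕 (⇑(u m)) ξ‖ₑ +
          ENNReal.ofReal (‖ξ‖ ^ s) * ‖𝓕 (⇑(u (m + 1))) ξ‖ₑ := by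
        rw [← mul_add]; gcongr; exact enorm_add_le _ _
    _ ≤ _ := (add_le_add (hterm m) (hterm (m + 1))).trans_eq (by
        rw [ofReal_mul zero_le_two, ofReal_ofNat, two_mul, add_mul])

/-- Endpoint case `r = 1`, `p = ∞` of the Szasz estimate: there is
`c = c(n,s) > 0` such that for every family `(u_j)_{j ∈ ℤ}` of Schwartz functions with
`supp 𝓕 u_j ⊆ {2^{j-1} ≤ |ξ| ≤ 3·2^{j-1}}` and `M := sup_j 2^{js} ‖u_j‖_{L¹} < ∞`,
the function `v(ξ) = Σ_j 𝓕 u_j(ξ)` satisfies `|ξ|^s |v(ξ)| ≤ c·M` for every `ξ ≠ 0`. -/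
theorem stmt2 (n : ℕ) (hn : 1 ≤ n) (s : ℝ) :
    ∃ c > 0, ∀ (u : ℤ → SchwartzMap (EuclideanSpace ℝ (Fin n)) ℂ),
      (∀ j : ℤ, Function.support (𝓕 (⇑(u j))) ⊆
        {ξ : EuclideanSpace ℝ (Fin n) | (2:ℝ) ^ (j-1) ≤ ‖ξ‖ ∧ ‖ξ‖ ≤ 3 * (2:ℝ) ^ (j-1)}) →
      ∀ M : ℝ≥0∞,
        (M = ⨆ j : ℤ, ENNReal.ofReal ((2:ℝ) ^ ((j:ℝ) * s)) * eLpNorm (⇑(u j)) 1 volume) →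
        M < ∞ →
      ∀ v : EuclideanSpace ℝ (Fin n) → ℂ,
        (v = fun ξ => ∑' j : ℤ, 𝓕 (⇑(u j)) ξ) →
        ∀ ξ : EuclideanSpace ℝ (Fin n), ξ ≠ 0 →
          ENNReal.ofReal (‖ξ‖ ^ s) * (‖v ξ‖₊ : ℝ≥0∞) ≤ ENNReal.ofReal c * M :=
  stmt2_general n s
end

section
/- Let n ≥ 1, 0 < p < ∞, and θ ∈ ℝ. Let φ be a Schwartz function on ℝⁿ such that 𝓕φ is not identically zero and supp 𝓕φ ⊆ {ξ : |ξ| ≤ 1/2}. Define F(ξ) := Σ_{k=1}^∞ k · 2^{−kθ} · 𝓕φ(ξ − 2^k e₁), where e₁ = (1,0,…,0); for each ξ at most one term of the sum is nonzero, since the supports of the translates are pairwise disjoint. Then ∫_{ℝⁿ} |ξ|^{θp} |F(ξ)|^p dξ = ∞. -/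
open MeasureTheory SchwartzMap Real FourierTransform ENNReal Metric Function

/-!
On the ball of radius `1/2` about `2^k e₁` only the `k`-th term of `F` survives, and there `|ξ|`
lies between `2^(k-1)` and `2^(k+1)`, so `|ξ|^{θp} |F ξ|^p ≥ 2^{-|θ|p} k^p |𝓕φ (ξ - 2^k e₁)|^p`.
These balls are pairwise disjoint, and each contributes at least `2^{-|θ|p} ∫ |𝓕φ|^p > 0`.
-/

theorem lintegral_eq_top_of_pairwise_disjoint {α ι : Type*} [MeasurableSpace α] [Countable ι]
    [Infinite ι] {μ : Measure α} {f : α → ℝ≥0∞} {S : ι → Set α}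
    (hS : ∀ i, MeasurableSet (S i)) (hd : Pairwise (Disjoint on S)) {c : ℝ≥0∞} (hc : c ≠ 0)
    (h : ∀ i, c ≤ ∫⁻ x in S i, f x ∂μ) : ∫⁻ x, f x ∂μ = ∞ :=
  eq_top_iff.mpr <| calc
    ∞ = ∑' _ : ι, c := (ENNReal.tsum_const_eq_top_of_ne_zero hc).symm
    _ ≤ ∑' i, ∫⁻ x in S i, f x ∂μ := ENNReal.tsum_le_tsum h
    _ = ∫⁻ x in ⋃ i, S i, f x ∂μ := (lintegral_iUnion hS hd f).symm
    _ ≤ ∫⁻ x, f x ∂μ := setLIntegral_le_lintegral _ _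

theorem lintegral_enorm_rpow_pos {X E : Type*} [TopologicalSpace X] [MeasurableSpace X]
    [OpensMeasurableSpace X] {μ : Measure X} [μ.IsOpenPosMeasure] [NormedAddCommGroup E]
    {f : X → E} (hf : Continuous f) (hf0 : f ≠ 0) (p : ℝ) :
    0 < ∫⁻ x, ‖f x‖ₑ ^ p ∂μ := by
  refine pos_iff_ne_zero.mpr fun h ↦ hf0 ?_
  rw [lintegral_eq_zero_iff (hf.enorm.measurable.pow_const p)] at h
  have hf_ae : f =ᵐ[μ] 0 := h.mono fun x hx ↦ by
    simp only [Pi.zero_apply, ENNReal.rpow_eq_zero_iff, enorm_eq_zero, enorm_ne_top,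
      false_and, or_false] at hx
    exact hx.1
  exact (hf.ae_eq_iff_eq μ continuous_zero).mp hf_ae

theorem setLIntegral_closedBall_comp_sub {E : Type*} [NormedAddCommGroup E] [MeasurableSpace E]
    [MeasurableAdd E] {μ : Measure E} [μ.IsAddRightInvariant] {g : E → ℝ≥0∞} {r : ℝ}
    (hg : support g ⊆ closedBall 0 r) (a : E) :
    ∫⁻ x in closedBall a r, g (x - a) ∂μ = ∫⁻ x, g x ∂μ := by
  rw [setLIntegral_eq_of_support_subset, lintegral_sub_right_eq_self g a]
  intro x hx
  simpa [dist_eq_norm] using hg hx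

theorem tsum_mul_comp_sub_eq_of_mem_closedBall {ι E R : Type*} [NormedAddCommGroup E]
    [NonUnitalNonAssocSemiring R] [TopologicalSpace R] {f : E → R} {r : ℝ}
    (hf : support f ⊆ closedBall 0 r) {a : ι → E}
    (hd : Pairwise (Disjoint on fun i ↦ closedBall (a i) r)) (c : ι → R) {i : ι} {x : E}
    (hx : x ∈ closedBall (a i) r) : ∑' j, c j * f (x - a j) = c i * f (x - a i) := by
  refine tsum_eq_single i fun j hji ↦ ?_
  have hx' : x ∉ closedBall (a j) r := (hd hji).symm.notMem_of_mem_left hx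
  have : f (x - a j) = 0 := notMem_support.mp fun h ↦ hx' (by simpa [dist_eq_norm] using hf h)
  rw [this, mul_zero]

theorem two_le_abs_two_pow_succ_sub_two_pow_succ {j k : ℕ} (hjk : j ≠ k) :
    (2 : ℝ) ≤ |2 ^ (j + 1) - 2 ^ (k + 1)| := by
  wlog hlt : j < k generalizing j k
  · rw [abs_sub_comm]; exact this hjk.symm (by omega)
  have h₁ : 2 * (2 : ℝ) ^ (j + 1) ≤ 2 ^ (k + 1) := by
    rw [← pow_succ']; exact pow_le_pow_right₀ one_le_two (by omega)
  have h₂ : (2 : ℝ) ≤ 2 ^ (j + 1) := le_self_pow₀ one_le_two (by omega)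
  rw [abs_sub_comm, abs_of_nonneg (by linarith)]
  linarith

theorem pairwise_disjoint_closedBall_two_pow_succ_smul {E : Type*} [NormedAddCommGroup E]
    [NormedSpace ℝ E] {e : E} (he : ‖e‖ = 1) :
    Pairwise (Disjoint on fun k : ℕ ↦ closedBall ((2 : ℝ) ^ (k + 1) • e) (1 / 2)) := by
  intro j k hjk
  refine closedBall_disjoint_closedBall ?_
  rw [dist_eq_norm, ← sub_smul, norm_smul, he, mul_one, Real.norm_eq_abs]
  linarith [two_le_abs_two_pow_succ_sub_two_pow_succ hjk]

theorem norm_mem_Icc_of_mem_closedBall_smul {E : Type*} [NormedAddCommGroup E]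
    [NormedSpace ℝ E] {e x : E} (he : ‖e‖ = 1) {t : ℝ} (ht : 1 ≤ t)
    (hx : x ∈ closedBall (t • e) (1 / 2)) : t / 2 ≤ ‖x‖ ∧ ‖x‖ ≤ 2 * t := by
  rw [mem_closedBall, dist_eq_norm] at hx
  have hte : ‖t • e‖ = t := by
    rw [norm_smul, he, mul_one, Real.norm_eq_abs, abs_of_pos (by linarith)]
  constructor
  · linarith [norm_sub_norm_le (t • e) x, norm_sub_rev (t • e) x]
  · linarith [norm_le_norm_add_norm_sub' x (t • e)]

theorem two_rpow_neg_abs_le_rpow {y : ℝ} (h₁ : 1 / 2 ≤ y) (h₂ : y ≤ 2) (s : ℝ) :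
    (2 : ℝ) ^ (-|s|) ≤ y ^ s := by
  rcases le_or_gt 0 s with hs | hs
  · rw [abs_of_nonneg hs, Real.rpow_neg zero_le_two, ← Real.inv_rpow zero_le_two]
    exact Real.rpow_le_rpow (by norm_num) (by linarith) hs
  · rw [abs_of_neg hs, neg_neg]
    exact Real.rpow_le_rpow_of_nonpos (by linarith) h₂ hs.le

theorem two_rpow_neg_abs_rpow_le {t x m θ p : ℝ} (ht : 0 < t) (h₁ : t / 2 ≤ x) (h₂ : x ≤ 2 * t)
    (hm : 1 ≤ m) (hp : 0 ≤ p) : ((2 : ℝ) ^ (-|θ|)) ^ p ≤ x ^ (θ * p) * (m * t ^ (-θ)) ^ p := by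
  have hx : 0 < x := by linarith
  have hweight : (2 : ℝ) ^ (-|θ|) ≤ x ^ θ * (m * t ^ (-θ)) := calc
    (2 : ℝ) ^ (-|θ|) ≤ (x / t) ^ θ :=
      two_rpow_neg_abs_le_rpow (by rw [le_div_iff₀ ht]; linarith)
        (by rw [div_le_iff₀ ht]; linarith) θ
    _ ≤ m * (x / t) ^ θ := le_mul_of_one_le_left (by positivity) hm
    _ = x ^ θ * (m * t ^ (-θ)) := by
      rw [Real.div_rpow hx.le ht.le, Real.rpow_neg ht.le]; ring
  rw [Real.rpow_mul hx.le, ← Real.mul_rpow (by positivity) (by positivity)]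
  exact Real.rpow_le_rpow (by positivity) hweight hp

theorem ofReal_mul_enorm_ofReal_mul_rpow {w c p : ℝ} (hw : 0 ≤ w) (hc : 0 ≤ c) (hp : 0 ≤ p)
    (z : ℂ) : ENNReal.ofReal w * ‖(c : ℂ) * z‖ₑ ^ p = ENNReal.ofReal (w * c ^ p) * ‖z‖ₑ ^ p := by
  rw [enorm_mul, ENNReal.mul_rpow_of_nonneg _ _ hp, ← ofReal_norm, Complex.norm_real,
    Real.norm_of_nonneg hc, ENNReal.ofReal_rpow_of_nonneg hc hp, ← mul_assoc, ← ENNReal.ofReal_mul hw]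

/-- **Statement 13.** Counterexample for `p > r'`: if `𝓕φ ≠ 0` is supported in the ball
`{|ξ| ≤ 1/2}` and `F(ξ) = Σ_{k≥1} k · 2^{-kθ} 𝓕φ(ξ - 2^k e₁)`, then
`∫ |ξ|^{θp} |F(ξ)|^p dξ = ∞`. -/
theorem stmt13 (n : ℕ) (hn : 1 ≤ n) (p θ : ℝ) (hp : 0 < p)
    (φ : SchwartzMap (EuclideanSpace ℝ (Fin n)) ℂ)
    (hφ0 : 𝓕 (⇑φ) ≠ 0)
    (hsupp : Function.support (𝓕 (⇑φ)) ⊆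
      {ξ : EuclideanSpace ℝ (Fin n) | ‖ξ‖ ≤ 1/2})
    (e₁ : EuclideanSpace ℝ (Fin n))
    (he₁ : e₁ = EuclideanSpace.single (⟨0, hn⟩ : Fin n) (1:ℝ))
    (F : EuclideanSpace ℝ (Fin n) → ℂ)
    (hF : F = fun ξ => ∑' k : ℕ,
      (((k:ℝ) + 1) * (2:ℝ) ^ (-(((k:ℝ) + 1)) * θ) : ℝ) *
        𝓕 (⇑φ) (ξ - (2:ℝ) ^ (k + 1) • e₁)) :
    (∫⁻ ξ : EuclideanSpace ℝ (Fin n),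
        ENNReal.ofReal (‖ξ‖ ^ (θ * p)) * (‖F ξ‖₊ : ℝ≥0∞) ^ p) = ∞ := by
  set f := 𝓕 ⇑φ
  have hf : Continuous f := by
    simpa only [f, ← SchwartzMap.fourier_coe] using (𝓕 φ).continuous
  have he : ‖e₁‖ = 1 := by simp [he₁]
  have hf_ball : support f ⊆ closedBall 0 (1 / 2) := fun η hη ↦
    mem_closedBall_zero_iff.mpr (hsupp hη)
  have hball : support (fun η ↦ ‖f η‖ₑ ^ p) ⊆ closedBall 0 (1 / 2) := fun η hη ↦
    hf_ball fun h ↦ hη (by simp [h, ENNReal.zero_rpow_of_pos hp])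
  have hd := pairwise_disjoint_closedBall_two_pow_succ_smul he
  have hε : ENNReal.ofReal (((2 : ℝ) ^ (-|θ|)) ^ p) ≠ 0 := (ofReal_pos.mpr (by positivity)).ne'
  have hI := (lintegral_enorm_rpow_pos hf hφ0 p (μ := volume)).ne'
  refine lintegral_eq_top_of_pairwise_disjoint (fun _ ↦ measurableSet_closedBall) hd
    (mul_ne_zero hε hI) fun k ↦ ?_
  rw [← setLIntegral_closedBall_comp_sub hball ((2 : ℝ) ^ (k + 1) • e₁),
    ← lintegral_const_mul' _ _ ofReal_ne_top]
  refine setLIntegral_mono' measurableSet_closedBall fun ξ hξ ↦ ?_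
  obtain ⟨h₁, h₂⟩ := norm_mem_Icc_of_mem_closedBall_smul he (one_le_pow₀ one_le_two) hξ
  have hck : (2 : ℝ) ^ (-((k : ℝ) + 1) * θ) = ((2 : ℝ) ^ (k + 1)) ^ (-θ) := by
    rw [← Real.rpow_natCast, ← Real.rpow_mul zero_le_two]; push_cast; ring_nf
  simp only [hF, ← enorm_eq_nnnorm]
  rw [tsum_mul_comp_sub_eq_of_mem_closedBall hf_ball hd _ hξ,
    ofReal_mul_enorm_ofReal_mul_rpow (by positivity) (by positivity) hp.le, hck]
  gcongr
  exact two_rpow_neg_abs_rpow_le (by positivity) h₁ h₂ (by simp) hp.le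
end

section
/- Let n ≥ 1, 0 < p < ∞, and θ ∈ ℝ. Let ψ be a Schwartz function on ℝⁿ such that 𝓕ψ is not identically zero and supp 𝓕ψ ⊆ {η : 3/4 ≤ |η| ≤ 5/4}. Define F(ξ) := Σ_{k=1}^∞ k^{−1/p} · 2^{−k(n/p + θ)} · 𝓕ψ(2^{−k} ξ); for each ξ at most one term of the sum is nonzero, since the dilated supports lie in pairwise disjoint annuli {3·2^{k−2} ≤ |ξ| ≤ 5·2^{k−2}}. Then ∫_{ℝⁿ} |ξ|^{θp} |F(ξ)|^p dξ = ∞. -/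
open MeasureTheory SchwartzMap Real FourierTransform ENNReal

/-!
The dilates `𝓕ψ(2⁻ᵏ ·)` are supported in pairwise disjoint dyadic annuli, so `|F|ᵖ` is the sum
of the `p`-th powers of the terms and the integral splits into a series. Substituting
`η = 2⁻ᵏ ξ` in the `k`-th term, the coefficient `k^{-1/p} 2^{-k(n/p+θ)}` exactly cancels the
Jacobian `2^{kn}` and the weight `2^{kθp}` up to the factor `1/k`, so the series is
`C · Σ 1/k = ∞` with `C = ∫ |η|^{θp} |𝓕ψ(η)|ᵖ dη > 0`.
-/

lemma tsum_ofReal_inv_natCast_add_one_eq_top :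
    ∑' k : ℕ, ENNReal.ofReal ((k + 1 : ℝ)⁻¹) = ∞ := by
  by_contra h
  have hsum := ENNReal.summable_toReal h
  simp only [fun k : ℕ => ENNReal.toReal_ofReal (by positivity : (0:ℝ) ≤ ((k:ℝ) + 1)⁻¹)] at hsum
  exact Real.not_summable_natCast_inv ((summable_nat_add_iff 1).1 (by exact_mod_cast hsum))

lemma eq_of_mem_dyadic_annulus {j k : ℤ} {r : ℝ}
    (hj : 3 / 4 ≤ (2 : ℝ) ^ j * r ∧ (2 : ℝ) ^ j * r ≤ 5 / 4)
    (hk : 3 / 4 ≤ (2 : ℝ) ^ k * r ∧ (2 : ℝ) ^ k * r ≤ 5 / 4) : j = k := by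
  have hr : 0 < r := pos_of_mul_pos_right (by linarith [hj.1]) (by positivity)
  have hdouble : ∀ {i l : ℤ}, i < l → 2 * ((2 : ℝ) ^ i * r) ≤ (2 : ℝ) ^ l * r := fun hil => by
    rw [← mul_assoc, ← zpow_one_add₀ two_ne_zero, add_comm]
    gcongr
    · norm_num
    · omega
  rcases lt_trichotomy j k with h | h | h
  · linarith [hdouble h]
  · exact h
  · linarith [hdouble h]

lemma support_subsingleton_of_support_subset_annulus {E F : Type*} [NormedAddCommGroup E]
    [NormedSpace ℝ E] [NormedAddCommGroup F] [NormedSpace ℝ F] {g : E → F}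
    (hsupp : Function.support g ⊆ {η | 3 / 4 ≤ ‖η‖ ∧ ‖η‖ ≤ 5 / 4}) (c : ℕ → ℝ) (x : E) :
    (Function.support fun k : ℕ => c k • g ((2 : ℝ) ^ (-((k : ℤ) + 1)) • x)).Subsingleton := by
  have hannulus : ∀ k : ℕ, c k • g ((2 : ℝ) ^ (-((k : ℤ) + 1)) • x) ≠ 0 →
      3 / 4 ≤ (2 : ℝ) ^ (-((k : ℤ) + 1)) * ‖x‖ ∧ (2 : ℝ) ^ (-((k : ℤ) + 1)) * ‖x‖ ≤ 5 / 4 :=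
    fun k hk => by simpa [norm_smul] using hsupp (right_ne_zero_of_smul hk)
  intro j hj k hk
  have := eq_of_mem_dyadic_annulus (hannulus j hj) (hannulus k hk)
  omega

lemma enorm_tsum_rpow_of_support_subsingleton {ι E : Type*} [NormedAddCommGroup E] {h : ι → E}
    (hh : (Function.support h).Subsingleton) {p : ℝ} (hp : 0 < p) :
    ‖∑' i, h i‖ₑ ^ p = ∑' i, ‖h i‖ₑ ^ p := by
  rcases hh.eq_empty_or_singleton with h0 | ⟨i, hi⟩
  · simp [Function.support_eq_empty_iff.1 h0, ENNReal.zero_rpow_of_pos hp]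
  · have hj : ∀ j ≠ i, h j = 0 := fun j hj => Function.notMem_support.1 (by simp [hi, hj])
    rw [tsum_eq_single i hj,
      tsum_eq_single i fun j hji => by simp [hj j hji, ENNReal.zero_rpow_of_pos hp]]

lemma rpow_coeff_mul_rpow_two_pow {t : ℝ} (ht : 0 < t) (p d θ : ℝ) (hp : 0 < p) :
    (t ^ (-(1 / p)) * (2 : ℝ) ^ (-t * (d / p + θ))) ^ p * ((2 : ℝ) ^ (-t)) ^ (-(θ * p + d))
      = t⁻¹ := by
  rw [mul_rpow (by positivity) (by positivity), ← rpow_mul ht.le, ← rpow_mul zero_le_two,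
    ← rpow_mul zero_le_two, mul_assoc, ← rpow_add zero_lt_two]
  have : -t * (d / p + θ) * p + -t * -(θ * p + d) = 0 := by field_simp; ring
  rw [this, Real.rpow_zero, mul_one, show -(1 / p) * p = -1 by field_simp, Real.rpow_neg_one]

section Scaling

variable {E : Type*} [NormedAddCommGroup E] [NormedSpace ℝ E] [FiniteDimensional ℝ E]
  [MeasurableSpace E] [BorelSpace E] (μ : Measure E) [μ.IsAddHaarMeasure]

lemma lintegral_comp_smul (f : E → ℝ≥0∞) {R : ℝ} (hR : R ≠ 0) :
    ∫⁻ x, f (R • x) ∂μ = ENNReal.ofReal |(R ^ Module.finrank ℝ E)⁻¹| * ∫⁻ x, f x ∂μ := by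
  calc ∫⁻ x, f (R • x) ∂μ
      = ∫⁻ y, f y ∂(Measure.map (R • ·) μ) :=
        (lintegral_map_equiv f
          (Homeomorph.smul (isUnit_iff_ne_zero.2 hR).unit).toMeasurableEquiv).symm
    _ = _ := by rw [Measure.map_addHaar_smul μ hR, lintegral_smul_measure, smul_eq_mul]

lemma lintegral_rpow_norm_mul_comp_smul (f : E → ℝ≥0∞) (s : ℝ) {a : ℝ} (ha : 0 < a) :
    ∫⁻ x, ENNReal.ofReal (‖x‖ ^ s) * f (a • x) ∂μ
      = ENNReal.ofReal (a ^ (-(s + Module.finrank ℝ E))) *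
          ∫⁻ x, ENNReal.ofReal (‖x‖ ^ s) * f x ∂μ := by
  have hweight : ∀ x : E, ENNReal.ofReal (‖x‖ ^ s)
      = ENNReal.ofReal (a ^ (-s)) * ENNReal.ofReal (‖a • x‖ ^ s) := fun x => by
    rw [← ENNReal.ofReal_mul (by positivity), norm_smul, Real.norm_of_nonneg ha.le,
      Real.mul_rpow ha.le (norm_nonneg x), ← mul_assoc, ← Real.rpow_add ha, neg_add_cancel,
      Real.rpow_zero, one_mul]
  rw [lintegral_congr fun x => by rw [hweight x, mul_assoc],
    lintegral_const_mul' _ _ ENNReal.ofReal_ne_top,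
    lintegral_comp_smul μ (fun y => ENNReal.ofReal (‖y‖ ^ s) * f y) ha.ne',
    ← mul_assoc, ← ENNReal.ofReal_mul (by positivity), abs_of_pos (by positivity),
    ← Real.rpow_natCast, ← Real.rpow_neg ha.le, ← Real.rpow_add ha, neg_add]

lemma lintegral_rpow_norm_mul_enorm_smul_comp_smul {F : Type*} [NormedAddCommGroup F]
    [NormedSpace ℝ F] (g : E → F) (s : ℝ) {p : ℝ} (hp : 0 ≤ p) {c : ℝ} (hc : 0 ≤ c) {a : ℝ}
    (ha : 0 < a) :
    ∫⁻ x, ENNReal.ofReal (‖x‖ ^ s) * ‖c • g (a • x)‖ₑ ^ p ∂μ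
      = ENNReal.ofReal (c ^ p * a ^ (-(s + Module.finrank ℝ E))) *
          ∫⁻ x, ENNReal.ofReal (‖x‖ ^ s) * ‖g x‖ₑ ^ p ∂μ := by
  have hcoeff : ∀ x, ENNReal.ofReal (‖x‖ ^ s) * ‖c • g (a • x)‖ₑ ^ p
      = ENNReal.ofReal (c ^ p) * (ENNReal.ofReal (‖x‖ ^ s) * ‖g (a • x)‖ₑ ^ p) := fun x => by
    rw [enorm_smul, ENNReal.mul_rpow_of_nonneg _ _ hp, Real.enorm_of_nonneg hc,
      ENNReal.ofReal_rpow_of_nonneg hc hp, mul_left_comm]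
  rw [lintegral_congr hcoeff, lintegral_const_mul' _ _ ENNReal.ofReal_ne_top,
    lintegral_rpow_norm_mul_comp_smul μ (fun y => ‖g y‖ₑ ^ p) s ha, ← mul_assoc,
    ← ENNReal.ofReal_mul (by positivity)]

end Scaling

lemma lintegral_rpow_norm_mul_enorm_rpow_pos {E F : Type*} [NormedAddCommGroup E]
    [MeasurableSpace E] [OpensMeasurableSpace E] (μ : Measure E) [μ.IsOpenPosMeasure]
    [NormedAddCommGroup F] {g : E → F} (hg : Continuous g) (hg0 : g ≠ 0) (h0 : g 0 = 0)
    (s p : ℝ) : 0 < ∫⁻ x, ENNReal.ofReal (‖x‖ ^ s) * ‖g x‖ₑ ^ p ∂μ := by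
  have hmeas : Measurable fun x : E => ENNReal.ofReal (‖x‖ ^ s) * ‖g x‖ₑ ^ p :=
    (measurable_norm.pow_const s).ennreal_ofReal.mul (hg.enorm.measurable.pow_const p)
  rw [lintegral_pos_iff_support hmeas]
  have hsub : Function.support g ⊆
      Function.support fun x => ENNReal.ofReal (‖x‖ ^ s) * ‖g x‖ₑ ^ p := by
    intro x hx
    have hx0 : x ≠ 0 := fun h => hx (h ▸ h0)
    refine (ENNReal.mul_pos ?_ ?_).ne'
    · exact (ENNReal.ofReal_pos.2 (Real.rpow_pos_of_pos (norm_pos_iff.2 hx0) s)).ne'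
    · exact (ENNReal.rpow_pos (enorm_pos.2 hx) enorm_ne_top).ne'
  exact (hg.isOpen_support.measure_pos μ (Function.support_nonempty_iff.2 hg0)).trans_le
    (measure_mono hsub)

theorem stmt14_general (n : ℕ) (p θ : ℝ) (hp : 0 < p)
    (ψ : SchwartzMap (EuclideanSpace ℝ (Fin n)) ℂ)
    (hψ0 : 𝓕 (⇑ψ) ≠ 0)
    (hsupp : Function.support (𝓕 (⇑ψ)) ⊆
      {η : EuclideanSpace ℝ (Fin n) | 3/4 ≤ ‖η‖ ∧ ‖η‖ ≤ 5/4})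
    (F : EuclideanSpace ℝ (Fin n) → ℂ)
    (hF : F = fun ξ => ∑' k : ℕ,
      ((((k:ℝ) + 1) ^ (-(1/p)) * (2:ℝ) ^ (-(((k:ℝ) + 1)) * (n/p + θ)) : ℝ) : ℂ) *
        𝓕 (⇑ψ) ((2:ℝ) ^ (-((k:ℤ) + 1)) • ξ)) :
    (∫⁻ ξ : EuclideanSpace ℝ (Fin n),
        ENNReal.ofReal (‖ξ‖ ^ (θ * p)) * (‖F ξ‖₊ : ℝ≥0∞) ^ p) = ∞ := by
  set g := 𝓕 (⇑ψ) with hg_def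
  set c : ℕ → ℝ := fun k => ((k:ℝ) + 1) ^ (-(1/p)) * (2:ℝ) ^ (-(((k:ℝ) + 1)) * (n/p + θ))
  set a : ℕ → ℝ := fun k => (2:ℝ) ^ (-((k:ℤ) + 1))
  have hg : Continuous g := by rw [hg_def, ← fourier_coe]; exact (𝓕 ψ).continuous
  have hC : 0 < ∫⁻ η, ENNReal.ofReal (‖η‖ ^ (θ * p)) * ‖g η‖ₑ ^ p :=
    lintegral_rpow_norm_mul_enorm_rpow_pos volume hg hψ0
      (Function.notMem_support.1 fun h => by have := (hsupp h).1; norm_num at this) _ _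
  have hpiece : ∀ k : ℕ, ∫⁻ ξ, ENNReal.ofReal (‖ξ‖ ^ (θ * p)) * ‖c k • g (a k • ξ)‖ₑ ^ p
      = ENNReal.ofReal ((k + 1 : ℝ)⁻¹) * ∫⁻ η, ENNReal.ofReal (‖η‖ ^ (θ * p)) * ‖g η‖ₑ ^ p :=
    fun k => by
      have ha : a k = (2 : ℝ) ^ (-((k : ℝ) + 1)) := by
        simp only [a, ← Real.rpow_intCast]; push_cast; rfl
      rw [lintegral_rpow_norm_mul_enorm_smul_comp_smul volume g _ hp.le (by positivity)
        (by positivity), finrank_euclideanSpace_fin, ha,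
        rpow_coeff_mul_rpow_two_pow (by positivity) _ _ _ hp]
  calc _ = ∫⁻ ξ, ∑' k, ENNReal.ofReal (‖ξ‖ ^ (θ * p)) * ‖c k • g (a k • ξ)‖ₑ ^ p :=
        lintegral_congr fun ξ => by
          rw [ENNReal.tsum_mul_left, ← enorm_tsum_rpow_of_support_subsingleton
            (support_subsingleton_of_support_subset_annulus hsupp c ξ) hp, hF]
          simp only [Complex.real_smul]
          rfl
    _ = ∑' k, ∫⁻ ξ, ENNReal.ofReal (‖ξ‖ ^ (θ * p)) * ‖c k • g (a k • ξ)‖ₑ ^ p :=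
        lintegral_tsum fun k => by fun_prop
    _ = ∞ := by
        rw [tsum_congr hpiece, ENNReal.tsum_mul_right, tsum_ofReal_inv_natCast_add_one_eq_top,
          ENNReal.top_mul hC.ne']

/-- **Statement 14.** Counterexample for `p < q`: if `𝓕ψ ≠ 0` is supported in the annulus
`{3/4 ≤ |η| ≤ 5/4}` and `F(ξ) = Σ_{k≥1} k^{-1/p} 2^{-k(n/p+θ)} 𝓕ψ(2^{-k} ξ)`, then
`∫ |ξ|^{θp} |F(ξ)|^p dξ = ∞`. -/
theorem stmt14 (n : ℕ) (hn : 1 ≤ n) (p θ : ℝ) (hp : 0 < p)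
    (ψ : SchwartzMap (EuclideanSpace ℝ (Fin n)) ℂ)
    (hψ0 : 𝓕 (⇑ψ) ≠ 0)
    (hsupp : Function.support (𝓕 (⇑ψ)) ⊆
      {η : EuclideanSpace ℝ (Fin n) | 3/4 ≤ ‖η‖ ∧ ‖η‖ ≤ 5/4})
    (F : EuclideanSpace ℝ (Fin n) → ℂ)
    (hF : F = fun ξ => ∑' k : ℕ,
      ((((k:ℝ) + 1) ^ (-(1/p)) * (2:ℝ) ^ (-(((k:ℝ) + 1)) * (n/p + θ)) : ℝ) : ℂ) *
        𝓕 (⇑ψ) ((2:ℝ) ^ (-((k:ℤ) + 1)) • ξ)) :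
    (∫⁻ ξ : EuclideanSpace ℝ (Fin n),
        ENNReal.ofReal (‖ξ‖ ^ (θ * p)) * (‖F ξ‖₊ : ℝ≥0∞) ^ p) = ∞ :=
  stmt14_general n p θ hp ψ hψ0 hsupp F hF
end
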